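/- Let $a : \mathbb{R} \to \mathbb{R}$ be continuous and let $f(x) = e^{-\int_x^b r(z)dz} + \int_x^b f(s)\,e^{-\int_x^s r(z)dz}\,(r(s) - a(s))\,ds$ hold for all $x \le b$, where $r : \mathbb{R} \to \mathbb{R}$ is continuous and $f$ is continuous. Then $f$ is differentiable on $(-\infty,b]$ and satisfies $f'(x) = a(x)f(x)$ with $f(b) = 1$; consequently, $f(x) = \exp\left(-\int_x^b a(z)\,dz\right)$. -/

import Mathlib

open Real Set intervalIntegral

private lemma prim_hasDerivAt {h : ℝ → ℝ} (hh : Continuous h) (b x : ℝ) :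
    HasDerivAt (fun u => ∫ t in u..b, h t) (-h x) x :=
  intervalIntegral.integral_hasDerivAt_left (hh.intervalIntegrable _ _)
    (hh.stronglyMeasurableAtFilter _ _) hh.continuousAt

private lemma prim_continuous {h : ℝ → ℝ} (hh : Continuous h) (b : ℝ) :
    Continuous (fun u => ∫ t in u..b, h t) :=
  continuous_iff_continuousAt.2 fun x => (prim_hasDerivAt hh b x).continuousAt

/-- a continuous solution of the renewal-type integral equation
`f(x) = e^{-∫_x^b r} + ∫_x^b f(s) e^{-∫_x^s r} (r(s) - a(s)) ds` on `(-∞,b]`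
is differentiable, satisfies `f' = a f` with `f(b) = 1`, and hence equals
`f(x) = exp(-∫_x^b a(z) dz)`. -/
theorem renewal_integral_equation
    (b : ℝ) (a r : ℝ → ℝ) (ha : Continuous a) (hr : Continuous r)
    (f : ℝ → ℝ) (hf : ContinuousOn f (Set.Iic b))
    (heq : ∀ x ∈ Set.Iic b,
      f x = Real.exp (-∫ z in x..b, r z)
        + ∫ s in x..b, f s * Real.exp (-∫ z in x..s, r z) * (r s - a s)) :
    f b = 1 ∧
    (∀ x ∈ Set.Iic b, HasDerivWithinAt f (a x * f x) (Set.Iic b) x) ∧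
    (∀ x ∈ Set.Iic b, f x = Real.exp (-∫ z in x..b, a z)) := by
  -- f b = 1
  have hfb : f b = 1 := by
    have := heq b (le_refl b)
    simpa using this
  -- continuous extension of f
  set g : ℝ → ℝ := fun x => f (min x b) with hg_def
  have hg_cont : Continuous g := by
    apply hf.comp_continuous (continuous_min.comp (continuous_id.prodMk continuous_const))
    intro x; exact min_le_right x b
  have hgf : ∀ x ∈ Set.Iic b, g x = f x := by
    intro x hx; simp only [hg_def]; rw [min_eq_left (Set.mem_Iic.mp hx)]
  -- the equation for g
  have heqg : ∀ x ∈ Set.Iic b,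
      g x = Real.exp (-∫ z in x..b, r z)
        + ∫ s in x..b, g s * Real.exp (-∫ z in x..s, r z) * (r s - a s) := by
    intro x hx
    rw [hgf x hx, heq x hx]
    congr 1
    apply intervalIntegral.integral_congr
    intro s hs
    have hsb : s ≤ b := by
      rcases hs with ⟨h1, h2⟩
      have : max x b = b := max_eq_right hx
      simpa [this] using h2
    simp only [hgf s hsb]
  -- E and F
  set E : ℝ → ℝ := fun x => Real.exp (∫ z in x..b, r z) with hE_def
  have hE_cont : Continuous E := Real.continuous_exp.comp (prim_continuous hr b)
  set F : ℝ → ℝ := fun x => g x * E x with hF_def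
  have hF_cont : Continuous F := hg_cont.mul hE_cont
  -- key exponential identity
  have hexp : ∀ x s : ℝ, Real.exp (-∫ z in x..s, r z) * E x = E s := by
    intro x s
    have hadd : (∫ z in x..s, r z) + (∫ z in s..b, r z) = ∫ z in x..b, r z :=
      intervalIntegral.integral_add_adjacent_intervals
        (hr.intervalIntegrable _ _) (hr.intervalIntegrable _ _)
    rw [hE_def]
    simp only [← Real.exp_add]
    congr 1
    linarith
  -- F satisfies the simpler equation
  have hF : ∀ x ∈ Set.Iic b, F x = 1 + ∫ s in x..b, F s * (r s - a s) := by
    intro x hx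
    have h1 : F x = g x * E x := rfl
    rw [h1, heqg x hx, add_mul]
    congr 1
    · rw [hE_def]
      rw [← Real.exp_add]
      simp
    · rw [← intervalIntegral.integral_mul_const]
      apply intervalIntegral.integral_congr
      intro s _
      simp only [hF_def]
      linear_combination (g s * (r s - a s)) * hexp x s
  have hFb : F b = 1 := by simpa using hF b (le_refl b)
  -- derivative of F within Iic b
  set φ : ℝ → ℝ := fun s => F s * (r s - a s) with hφ_def
  have hφ_cont : Continuous φ := hF_cont.mul (hr.sub ha)
  have hF' : ∀ x ∈ Set.Iic b, HasDerivWithinAt F (-φ x) (Set.Iic b) x := by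
    intro x hx
    have hG : HasDerivAt (fun u => 1 + ∫ s in u..b, φ s) (-φ x) x :=
      (prim_hasDerivAt hφ_cont b x).const_add 1
    exact (hG.hasDerivWithinAt).congr (fun y hy => (hF y hy)) (hF x hx)
  -- K := F * exp(-∫ x..b (r - a)) is constant on Iic b
  set ψ : ℝ → ℝ := fun s => r s - a s with hψ_def
  have hψ_cont : Continuous ψ := hr.sub ha
  set I : ℝ → ℝ := fun x => ∫ z in x..b, ψ z with hI_def
  have hI_cont : Continuous I := prim_continuous hψ_cont b
  set K : ℝ → ℝ := fun x => F x * Real.exp (-(I x)) with hK_def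
  have hK_cont : Continuous K := hF_cont.mul (Real.continuous_exp.comp hI_cont.neg)
  have hK' : ∀ x ∈ Set.Iic b, HasDerivWithinAt K 0 (Set.Iic b) x := by
    intro x hx
    have hI' : HasDerivAt (fun u => Real.exp (-(I u))) (ψ x * Real.exp (-(I x))) x := by
      have h1 : HasDerivAt I (-ψ x) x := prim_hasDerivAt hψ_cont b x
      have h2 : HasDerivAt (fun u => -(I u)) (ψ x) x := by
        have := h1.neg; rw [neg_neg] at this; exact this
      simpa [mul_comm] using h2.exp
    have := (hF' x hx).mul hI'.hasDerivWithinAt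
    have key : -φ x * Real.exp (-(I x)) + F x * (ψ x * Real.exp (-(I x))) = 0 := by
      rw [hφ_def, hψ_def]; ring
    rw [key] at this
    exact this
  have hKconst : ∀ x ∈ Set.Iic b, K x = K b := by
    intro x hx
    have := constant_of_has_deriv_right_zero (f := K) (a := x) (b := b)
      (hK_cont.continuousOn) ?_ b ⟨hx, le_refl b⟩
    · exact this.symm
    · intro y hy
      have hy' : y ∈ Set.Iic b := le_of_lt hy.2
      have hmem : Set.Iic b ∈ nhds y := Iic_mem_nhds hy.2
      exact ((hK' y hy').hasDerivAt hmem).hasDerivWithinAt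
  have hKb : K b = 1 := by
    rw [hK_def]
    simp only [hI_def]
    simp [hFb]
  -- hence F x = exp (I x)
  have hFval : ∀ x ∈ Set.Iic b, F x = Real.exp (I x) := by
    intro x hx
    have h1 : F x * Real.exp (-(I x)) = 1 := by
      have := hKconst x hx; rw [hKb] at this; exact this
    have h2 : Real.exp (-(I x)) ≠ 0 := Real.exp_ne_zero _
    rw [Real.exp_neg] at h1
    field_simp at h1
    linarith
  -- third claim
  have hthird : ∀ x ∈ Set.Iic b, f x = Real.exp (-∫ z in x..b, a z) := by
    intro x hx
    have h1 : f x = g x := (hgf x hx).symm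
    have h2' : g x * Real.exp (∫ z in x..b, r z)
        = Real.exp (∫ z in x..b, (r z - a z)) := hFval x hx
    have hRne : Real.exp (∫ z in x..b, r z) ≠ 0 := Real.exp_ne_zero _
    have hsub : (∫ z in x..b, (r z - a z))
        = (∫ z in x..b, r z) - (∫ z in x..b, a z) :=
      intervalIntegral.integral_sub (hr.intervalIntegrable _ _) (ha.intervalIntegrable _ _)
    have h3 : g x = Real.exp (∫ z in x..b, (r z - a z)) / Real.exp (∫ z in x..b, r z) := by
      rw [eq_div_iff hRne]; exact h2'
    rw [h1, h3, ← Real.exp_sub, hsub]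
    congr 1
    ring
  refine ⟨hfb, ?_, hthird⟩
  -- derivative claim
  intro x hx
  have hD : HasDerivAt (fun u => Real.exp (-∫ z in u..b, a z))
      (a x * Real.exp (-∫ z in x..b, a z)) x := by
    have h1 : HasDerivAt (fun u => -∫ z in u..b, a z) (a x) x := by
      have := (prim_hasDerivAt ha b x).neg; rw [neg_neg] at this; exact this
    simpa [mul_comm] using h1.exp
  have := hD.hasDerivWithinAt.congr (fun y hy => hthird y hy) (hthird x hx)
  rw [hthird x hx]
  exact this
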